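/- The coefficients H₁,…,Hₙ of the Lagrange interpolation polynomial through (a₁,b₁),…,(aₙ,bₙ) (a's distinct) pairwise commute under the canonical Poisson bracket: for all i,j, Σ_{k=1}^{n} (∂Hᵢ/∂aₖ ∂Hⱼ/∂bₖ − ∂Hⱼ/∂aₖ ∂Hᵢ/∂bₖ) = 0 on the open set of pairwise-distinct a. -/

import Mathlib

/-!
Sliding a node `(a k, b k)` along the graph of the interpolating polynomial `P` leaves `P`
unchanged, so every coefficient `H` of `P` satisfies `∂H/∂a_k + P'(a k) ∂H/∂b_k = 0`. Hence
`∂Hᵢ/∂a_k ∂Hⱼ/∂b_k = -P'(a k) ∂Hᵢ/∂b_k ∂Hⱼ/∂b_k` is symmetric in `i, j` and every summand of the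
bracket vanishes. Differentiability of `H` comes from Cramer's rule.
-/

/-- Partial derivative with respect to `a_k`. -/
noncomputable def pa {n : ℕ} (f : (Fin n → ℝ) × (Fin n → ℝ) → ℝ) (k : Fin n)
    (x : (Fin n → ℝ) × (Fin n → ℝ)) : ℝ :=
  fderiv ℝ f x (Pi.single k 1, 0)

/-- Partial derivative with respect to `b_k`. -/
noncomputable def pb {n : ℕ} (f : (Fin n → ℝ) × (Fin n → ℝ) → ℝ) (k : Fin n)
    (x : (Fin n → ℝ) × (Fin n → ℝ)) : ℝ :=
  fderiv ℝ f x (0, Pi.single k 1)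

/-- The coefficient vector of the Lagrange interpolation polynomial through
`(a i, b i)`, as a function of `(a, b)`. -/
noncomputable def lagCoeff {n : ℕ} (x : (Fin n → ℝ) × (Fin n → ℝ)) : Fin n → ℝ :=
  (Matrix.vandermonde x.1)⁻¹.mulVec x.2

open Matrix Polynomial Filter Topology

theorem DifferentiableAt.matrix_det {𝕜 E m : Type*} [NontriviallyNormedField 𝕜]
    [NormedAddCommGroup E] [NormedSpace 𝕜 E] [Fintype m] [DecidableEq m]
    {M : E → Matrix m m 𝕜} {x : E} (hM : ∀ i j, DifferentiableAt 𝕜 (fun y => M y i j) x) :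
    DifferentiableAt 𝕜 (fun y => (M y).det) x := by
  simp only [det_apply, Units.smul_def, zsmul_eq_mul]
  exact DifferentiableAt.fun_sum fun σ _ =>
    ((HasFDerivAt.finsetProd fun i _ => (hM (σ i) i).hasFDerivAt).differentiableAt).const_mul _

section Vandermonde

variable {R : Type*} [CommRing R] [TopologicalSpace R] [IsTopologicalRing R] {n : ℕ}

theorem continuous_vandermonde : Continuous fun a : Fin n → R => vandermonde a :=
  continuous_pi fun i => continuous_pi fun j => by simp only [vandermonde_apply]; fun_prop

theorem eventually_injective_update [IsDomain R] [T2Space R] {a : Fin n → R} (ha : Function.Injective a)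
    (k : Fin n) : ∀ᶠ t in 𝓝 (a k), Function.Injective (Function.update a k t) := by
  have hdet : ContinuousAt (fun t => (vandermonde (Function.update a k t)).det) (a k) :=
    (continuous_vandermonde.comp (continuous_const.update k continuous_id)).matrix_det.continuousAt
  have hne : (vandermonde (Function.update a k (a k))).det ≠ 0 := by
    rwa [Function.update_eq_self, det_vandermonde_ne_zero_iff]
  exact (hdet.eventually_ne hne).mono fun _ h => det_vandermonde_ne_zero_iff.1 h

end Vandermonde

section Interpolation

variable {n : ℕ} {x : (Fin n → ℝ) × (Fin n → ℝ)}

theorem lagCoeff_eq_iff {a b c : Fin n → ℝ} (ha : Function.Injective a) :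
    lagCoeff (a, b) = c ↔ vandermonde a *ᵥ c = b := by
  have hV : IsUnit (vandermonde a).det := (det_vandermonde_ne_zero_iff.2 ha).isUnit
  constructor
  · rintro rfl
    simp [lagCoeff, mulVec_mulVec, mul_nonsing_inv _ hV]
  · rintro rfl
    simp [lagCoeff, mulVec_mulVec, nonsing_inv_mul _ hV]

theorem vandermonde_mulVec_lagCoeff (hx : Function.Injective x.1) :
    vandermonde x.1 *ᵥ lagCoeff x = x.2 :=
  (lagCoeff_eq_iff (b := x.2) hx).1 rfl

theorem lagCoeff_apply_eq_det_updateCol_div (x : (Fin n → ℝ) × (Fin n → ℝ)) (i : Fin n) :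
    lagCoeff x i = ((vandermonde x.1).updateCol i x.2).det / (vandermonde x.1).det := by
  rw [lagCoeff, inv_def, smul_mulVec, ← cramer_eq_adjugate_mulVec, Ring.inverse_eq_inv',
    Pi.smul_apply, cramer_apply, smul_eq_mul, inv_mul_eq_div]

theorem differentiableAt_lagCoeff (hx : Function.Injective x.1) :
    DifferentiableAt ℝ lagCoeff x := by
  have hV : ∀ i j, DifferentiableAt ℝ
      (fun y : (Fin n → ℝ) × (Fin n → ℝ) => vandermonde y.1 i j) x :=
    fun i j => by simp only [vandermonde_apply]; fun_prop
  refine differentiableAt_pi.2 fun i => ?_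
  simp only [lagCoeff_apply_eq_det_updateCol_div, div_eq_mul_inv]
  refine (DifferentiableAt.matrix_det fun r s => ?_).mul
    ((DifferentiableAt.matrix_det hV).inv (det_vandermonde_ne_zero_iff.2 hx))
  simp only [updateCol_apply]
  split_ifs
  · fun_prop
  · exact hV r s

noncomputable def lagPoly (x : (Fin n → ℝ) × (Fin n → ℝ)) : ℝ[X] :=
  ∑ s, C (lagCoeff x s) * X ^ (s : ℕ)

theorem eval_lagPoly (x : (Fin n → ℝ) × (Fin n → ℝ)) (t : ℝ) :
    (lagPoly x).eval t = ∑ s, lagCoeff x s * t ^ (s : ℕ) := by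
  simp [lagPoly, eval_finsetSum]

theorem eval_lagPoly_node (hx : Function.Injective x.1) (r : Fin n) :
    (lagPoly x).eval (x.1 r) = x.2 r := by
  rw [eval_lagPoly, ← congrFun (vandermonde_mulVec_lagCoeff hx) r]
  simp [mulVec, dotProduct, vandermonde_apply, mul_comm]

theorem lagCoeff_update_eval_lagPoly (hx : Function.Injective x.1) {k : Fin n} {t : ℝ}
    (ht : Function.Injective (Function.update x.1 k t)) :
    lagCoeff (Function.update x.1 k t, Function.update x.2 k ((lagPoly x).eval t)) =
      lagCoeff x := by
  rw [lagCoeff_eq_iff ht]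
  ext r
  rcases eq_or_ne r k with rfl | hr
  · simp [eval_lagPoly, mulVec, dotProduct, vandermonde_apply, mul_comm]
  · simp only [mulVec, dotProduct, vandermonde_apply, Function.update_of_ne hr]
    rw [← eval_lagPoly_node hx r, eval_lagPoly]
    simp [mul_comm]

theorem fderiv_lagCoeff_slide (hx : Function.Injective x.1) (k : Fin n) :
    fderiv ℝ lagCoeff x
      (Pi.single k 1, (derivative (lagPoly x)).eval (x.1 k) • Pi.single k 1) = 0 := by
  set P := lagPoly x
  let γ : ℝ → (Fin n → ℝ) × (Fin n → ℝ) := fun t =>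
    (Function.update x.1 k t, Function.update x.2 k (P.eval t))
  have hγx : γ (x.1 k) = x := by simp [γ, P, eval_lagPoly_node hx]
  have hγ : HasDerivAt γ (Pi.single k 1, (derivative P).eval (x.1 k) • Pi.single k 1) (x.1 k) :=
    (hasDerivAt_update x.1 k _).prodMk ((hasDerivAt_update x.2 k _).scomp _ (P.hasDerivAt _))
  have hconst : lagCoeff ∘ γ =ᶠ[𝓝 (x.1 k)] fun _ => lagCoeff x :=
    (eventually_injective_update hx k).mono fun t ht => lagCoeff_update_eval_lagPoly hx ht
  have hD : HasFDerivAt lagCoeff (fderiv ℝ lagCoeff x) (γ (x.1 k)) := by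
    rw [hγx]
    exact (differentiableAt_lagCoeff hx).hasFDerivAt
  exact (hD.comp_hasDerivAt _ hγ).unique ((hasDerivAt_const _ _).congr_of_eventuallyEq hconst)

theorem pa_lagCoeff (hx : Function.Injective x.1) (i k : Fin n) :
    pa (fun y => lagCoeff y i) k x =
      -(derivative (lagPoly x)).eval (x.1 k) * pb (fun y => lagCoeff y i) k x := by
  have hi : HasFDerivAt (fun y => lagCoeff y i)
      ((ContinuousLinearMap.proj i).comp (fderiv ℝ lagCoeff x)) x :=
    (hasFDerivAt_apply (𝕜 := ℝ) i (lagCoeff x)).comp x (differentiableAt_lagCoeff hx).hasFDerivAt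
  have hsplit : ((Pi.single k 1, 0) : (Fin n → ℝ) × (Fin n → ℝ)) =
      (Pi.single k 1, (derivative (lagPoly x)).eval (x.1 k) • Pi.single k 1) -
        (derivative (lagPoly x)).eval (x.1 k) • (0, Pi.single k 1) := by
    ext <;> simp
  simp only [pa, pb, hi.fderiv, ContinuousLinearMap.comp_apply, hsplit, map_sub, map_smul,
    fderiv_lagCoeff_slide hx k]
  simp

end Interpolation

theorem stmt16 {n : ℕ} (x : (Fin n → ℝ) × (Fin n → ℝ)) (ha : Function.Injective x.1) :
    ∀ i j : Fin n,
      ∑ k, (pa (fun y => lagCoeff y i) k x * pb (fun y => lagCoeff y j) k x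
        - pa (fun y => lagCoeff y j) k x * pb (fun y => lagCoeff y i) k x) = 0 := by
  intro i j
  refine Finset.sum_eq_zero fun k _ => ?_
  rw [pa_lagCoeff ha, pa_lagCoeff ha]
  ring
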